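/- For Re(s) > 1, (π/2) ∫₀^∞ e^(-sx)(e^x − 2ψ(e^(-2x))) dx = (π/2)(1/(s−1) − 2ξ(s)/(s(s−1)) + π^(-s/2) ∑_{n≥1} n^(-s) Γ(s/2, π n²)). -/

import Mathlib

/-!
Substituting `t = π n² e^(-2x)` gives
`∫₀^∞ e^(-sx) e^(-π n² e^(-2x)) dx = (1/2) (π n²)^(-s/2) γ(s/2, π n²)`.
For `σ = Re s > 1` the integrals of the absolute values are at most
`(1/2) (π n²)^(-σ/2) Γ(σ/2)`, which is summable in `n`, so the series `ψ` may be integrated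
termwise. With `γ = Γ - Γ(·, ·)` and `∑ n^(-s) = ζ(s)` this yields
`∫₀^∞ e^(-sx) ψ(e^(-2x)) dx = (1/2) π^(-s/2) (Γ(s/2) ζ(s) - ∑ n^(-s) Γ(s/2, π n²))`, while the
term `e^x` contributes `1/(s-1)`; finally `2ξ(s)/(s(s-1)) = π^(-s/2) Γ(s/2) ζ(s)`.
-/

open MeasureTheory Real Complex

/-- Lower incomplete gamma function `γ(s, x)`. -/
noncomputable def lowerGamma (s : ℂ) (x : ℝ) : ℂ :=
  ∫ t in (0 : ℝ)..x, (t : ℂ) ^ (s - 1) * Complex.exp (-t)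

/-- Upper incomplete gamma function `Γ(s, x)`. -/
noncomputable def upperGamma (s : ℂ) (x : ℝ) : ℂ :=
  ∫ t in Set.Ioi x, (t : ℂ) ^ (s - 1) * Complex.exp (-t)

/-- Modified Jacobi theta function `ψ(x) = ∑_{n≥1} e^(-π n² x)`. -/
noncomputable def jpsi (x : ℝ) : ℝ := ∑' n : ℕ+, Real.exp (-π * n ^ 2 * x)

/-- The Riemann xi function `ξ(s) = (1/2) s (s-1) π^(-s/2) Γ(s/2) ζ(s)`. -/
noncomputable def xi (s : ℂ) : ℂ :=
  s * (s - 1) / 2 * ((π : ℂ) ^ (-s / 2) * Complex.Gamma (s / 2) * riemannZeta s)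

open Set Filter Topology

theorem MeasureTheory.integrable_tsum_of_summable_integral_norm {α E ι : Type*}
    [MeasurableSpace α] {μ : Measure α} [NormedAddCommGroup E] [CompleteSpace E] [Countable ι]
    {F : ι → α → E} (hF_int : ∀ i, Integrable (F i) μ)
    (hF_sum : Summable fun i ↦ ∫ a, ‖F i a‖ ∂μ) :
    Integrable (fun a ↦ ∑' i, F i a) μ := by
  have hmeas i : AEMeasurable (fun a ↦ ‖F i a‖ₑ) μ := (hF_int i).1.enorm
  have hlint : ∫⁻ a, ∑' i, ‖F i a‖ₑ ∂μ ≠ ⊤ := by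
    rw [lintegral_tsum hmeas]
    have (i : ι) : ∫⁻ a, ‖F i a‖ₑ ∂μ = ENNReal.ofReal (∫ a, ‖F i a‖ ∂μ) :=
      (ofReal_integral_norm_eq_lintegral_enorm (hF_int i)).symm
    rw [funext this, ← ENNReal.ofReal_tsum_of_nonneg
      (fun i ↦ integral_nonneg fun _ ↦ norm_nonneg _) hF_sum]
    exact ENNReal.ofReal_ne_top
  have hsum : ∀ᵐ a ∂μ, Summable fun i ↦ F i a := by
    filter_upwards [ae_lt_top' (AEMeasurable.tsum hmeas) hlint] with a ha
    exact (tsum_enorm_ne_top_iff_summable_norm.1 ha.ne).of_norm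
  refine ⟨aestronglyMeasurable_of_tendsto_ae atTop
    (fun s ↦ Finset.aestronglyMeasurable_fun_sum s fun i _ ↦ (hF_int i).1)
    (hsum.mono fun a ha ↦ ha.hasSum), ?_⟩
  exact lt_of_le_of_lt (lintegral_mono fun a ↦ enorm_tsum_le_tsum_enorm) hlint.lt_top

theorem lowerGamma_add_upperGamma {w : ℂ} (hw : 0 < w.re) {X : ℝ} (hX : 0 ≤ X) :
    lowerGamma w X + upperGamma w X = Complex.Gamma w := by
  have hint : IntegrableOn (fun t : ℝ ↦ (t : ℂ) ^ (w - 1) * Complex.exp (-t)) (Ioi 0) :=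
    (Complex.GammaIntegral_convergent hw).congr_fun (fun t _ ↦ by push_cast; ring)
      measurableSet_Ioi
  rw [Complex.Gamma_eq_integral hw, Complex.GammaIntegral, lowerGamma, upperGamma,
    intervalIntegral.integral_of_le hX, ← setIntegral_union (Ioc_disjoint_Ioi le_rfl)
      measurableSet_Ioi (hint.mono_set Ioc_subset_Ioi_self) (hint.mono_set (Ioi_subset_Ioi hX)),
    Ioc_union_Ioi_eq_Ioi hX]
  refine setIntegral_congr_fun measurableSet_Ioi fun t _ ↦ ?_
  push_cast
  ring

theorem norm_lowerGamma_le {w : ℂ} (hw : 0 < w.re) {X : ℝ} (hX : 0 ≤ X) :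
    ‖lowerGamma w X‖ ≤ Real.Gamma w.re := by
  have hnorm : ∀ t ∈ Ioi (0 : ℝ),
      ‖(t : ℂ) ^ (w - 1) * Complex.exp (-t)‖ = Real.exp (-t) * t ^ (w.re - 1) := fun t ht ↦ by
    rw [norm_mul, Complex.norm_cpow_eq_rpow_re_of_pos ht, ← Complex.ofReal_neg,
      Complex.norm_exp_ofReal, Complex.sub_re, Complex.one_re, mul_comm]
  rw [lowerGamma, intervalIntegral.integral_of_le hX, Real.Gamma_eq_integral hw]
  calc _ ≤ ∫ t in Ioc 0 X, ‖(t : ℂ) ^ (w - 1) * Complex.exp (-t)‖ :=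
        norm_integral_le_integral_norm _
    _ ≤ ∫ t in Ioi (0 : ℝ), ‖(t : ℂ) ^ (w - 1) * Complex.exp (-t)‖ :=
        setIntegral_mono_set
          ((Real.GammaIntegral_convergent hw).congr_fun (fun t ht ↦ (hnorm t ht).symm)
            measurableSet_Ioi)
          (Eventually.of_forall fun _ ↦ norm_nonneg _) Ioc_subset_Ioi_self.eventuallyLE
    _ = _ := setIntegral_congr_fun measurableSet_Ioi hnorm

theorem hasSum_pnat_cpow_neg_riemannZeta {s : ℂ} (hs : 1 < s.re) :
    HasSum (fun n : ℕ+ ↦ (n : ℂ) ^ (-s)) (riemannZeta s) := by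
  have := (Complex.summable_one_div_nat_cpow.mpr hs).hasSum
  rw [← zeta_eq_tsum_one_div_nat_cpow hs] at this
  rw [hasSum_pnat_iff (f := fun n : ℕ ↦ (n : ℂ) ^ (-s))]
  simpa [zero_cpow (Complex.ne_zero_of_one_lt_re hs), Complex.cpow_neg] using this

theorem integral_Ioi_cexp_neg_mul {a : ℂ} (ha : 0 < a.re) :
    ∫ x in Ioi (0 : ℝ), Complex.exp (-a * x) = 1 / a := by
  rw [integral_exp_mul_complex_Ioi (by simpa using ha)]
  field_simp [Complex.ne_zero_of_re_pos ha]
  simp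

theorem image_mul_exp_neg_two_mul_Ioi {c : ℝ} (hc : 0 < c) :
    (fun x : ℝ ↦ c * Real.exp (-2 * x)) '' Ioi 0 = Ioo 0 c := by
  ext t
  constructor
  · rintro ⟨x, hx, rfl⟩
    exact ⟨by positivity,
      mul_lt_of_lt_one_right hc (Real.exp_lt_one_iff.2 (by linarith [hx.out]))⟩
  · rintro ⟨ht0, htc⟩
    refine ⟨-Real.log (t / c) / 2, ?_, ?_⟩
    · have := Real.log_neg (div_pos ht0 hc) ((div_lt_one hc).2 htc)
      simp only [mem_Ioi]
      linarith
    · dsimp only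
      rw [show -2 * (-Real.log (t / c) / 2) = Real.log (t / c) by ring,
        Real.exp_log (div_pos ht0 hc)]
      field_simp

theorem integral_Ioo_eq_integral_Ioi_mul_exp_neg_two_mul {E : Type*} [NormedAddCommGroup E]
    [NormedSpace ℝ E] {c : ℝ} (hc : 0 < c) (g : ℝ → E) :
    ∫ t in Ioo 0 c, g t =
      ∫ x in Ioi 0, (2 * (c * Real.exp (-2 * x))) • g (c * Real.exp (-2 * x)) := by
  have hderiv : ∀ x ∈ Ioi (0 : ℝ), HasDerivWithinAt (fun x ↦ c * Real.exp (-2 * x))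
      (-(2 * (c * Real.exp (-2 * x)))) (Ioi 0) x := fun x _ ↦
    (((hasDerivAt_id x).const_mul (-2)).exp.const_mul c).hasDerivWithinAt.congr_deriv
      (by simp only [id]; ring)
  have hinj : InjOn (fun x : ℝ ↦ c * Real.exp (-2 * x)) (Ioi 0) := fun a _ b _ h ↦ by
    simpa using (mul_right_injective₀ hc.ne').comp Real.exp_injective |>.eq_iff.mp h
  rw [← image_mul_exp_neg_two_mul_Ioi hc,
    integral_image_eq_integral_abs_deriv_smul measurableSet_Ioi hderiv hinj]
  refine setIntegral_congr_fun measurableSet_Ioi fun x _ ↦ ?_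
  rw [abs_neg, abs_of_pos (by positivity)]

theorem Complex.ofReal_exp_cpow (y : ℝ) (w : ℂ) :
    (Real.exp y : ℂ) ^ w = Complex.exp (y * w) := by
  rw [Complex.cpow_def_of_ne_zero (Complex.ofReal_ne_zero.2 (Real.exp_pos y).ne'),
    ← Complex.ofReal_log (Real.exp_pos y).le, Real.log_exp]

theorem integral_cexp_mul_exp_neg_mul_exp_eq_lowerGamma {c : ℝ} (hc : 0 < c) (s : ℂ) :
    ∫ x in Ioi (0 : ℝ), Complex.exp (-s * x) * (Real.exp (-(c * Real.exp (-2 * x))) : ℂ) =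
      (c : ℂ) ^ (-s / 2) / 2 * lowerGamma (s / 2) c := by
  rw [lowerGamma, intervalIntegral.integral_of_le hc.le, integral_Ioc_eq_integral_Ioo,
    integral_Ioo_eq_integral_Ioi_mul_exp_neg_two_mul hc, ← integral_const_mul]
  refine setIntegral_congr_fun measurableSet_Ioi fun x _ ↦ ?_
  have hφ : (0 : ℝ) < c * Real.exp (-2 * x) := by positivity
  have hpow : ((c * Real.exp (-2 * x) : ℝ) : ℂ) ^ (s / 2 - 1) =
      (c : ℂ) ^ (s / 2) * Complex.exp (-s * x) / (c * Real.exp (-2 * x) : ℝ) := by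
    rw [Complex.cpow_sub _ _ (Complex.ofReal_ne_zero.2 hφ.ne'), Complex.cpow_one,
      Complex.ofReal_mul, Complex.mul_cpow_ofReal_nonneg hc.le (Real.exp_pos _).le,
      Complex.ofReal_exp_cpow]
    push_cast
    ring_nf
  rw [hpow, neg_div, Complex.cpow_neg, Complex.real_smul]
  have hc0 : (c : ℂ) ≠ 0 := Complex.ofReal_ne_zero.2 hc.ne'
  have hcpow : (c : ℂ) ^ (s / 2) ≠ 0 := by simp [Complex.cpow_eq_zero_iff, hc0]
  push_cast
  field_simp [Complex.exp_ne_zero]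

theorem norm_cexp_mul_ofReal_exp (s : ℂ) (x y : ℝ) :
    ‖Complex.exp (-s * x) * (Real.exp y : ℂ)‖ = Real.exp (-s.re * x) * Real.exp y := by
  rw [norm_mul, Complex.norm_exp, Complex.norm_real, Real.norm_of_nonneg (Real.exp_pos y).le]
  simp

theorem integrableOn_cexp_mul_exp_neg_mul_exp {s : ℂ} (hs : 0 < s.re) {c : ℝ} (hc : 0 ≤ c) :
    IntegrableOn
      (fun x : ℝ ↦ Complex.exp (-s * x) * (Real.exp (-(c * Real.exp (-2 * x))) : ℂ)) (Ioi 0) := by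
  refine (exp_neg_integrableOn_Ioi 0 hs).mono' (by fun_prop) (Eventually.of_forall fun x ↦ ?_)
  rw [norm_cexp_mul_ofReal_exp]
  exact mul_le_of_le_one_right (Real.exp_pos _).le
    (Real.exp_le_one_iff.2 (neg_nonpos.2 (by positivity)))

theorem integral_norm_cexp_mul_exp_neg_mul_exp_le {s : ℂ} (hs : 0 < s.re) {c : ℝ} (hc : 0 < c) :
    ∫ x in Ioi (0 : ℝ), ‖Complex.exp (-s * x) * (Real.exp (-(c * Real.exp (-2 * x))) : ℂ)‖ ≤
      c ^ (-s.re / 2) / 2 * Real.Gamma (s.re / 2) := by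
  -- At the real exponent `s.re` the integrand is its own norm, so the evaluation applies.
  have hcast : ∀ x : ℝ,
      ((‖Complex.exp (-s * x) * (Real.exp (-(c * Real.exp (-2 * x))) : ℂ)‖ : ℝ) : ℂ) =
        Complex.exp (-(s.re : ℂ) * x) * (Real.exp (-(c * Real.exp (-2 * x))) : ℂ) := fun x ↦ by
    rw [norm_cexp_mul_ofReal_exp]
    push_cast
    rfl
  rw [← Real.norm_of_nonneg (integral_nonneg fun _ ↦ norm_nonneg _), ← Complex.norm_real,
    ← integral_complex_ofReal, funext hcast, integral_cexp_mul_exp_neg_mul_exp_eq_lowerGamma hc,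
    norm_mul, norm_div, Complex.norm_cpow_eq_rpow_re_of_pos hc]
  simp only [Complex.neg_re, Complex.div_ofNat_re, Complex.ofReal_re, Complex.norm_ofNat]
  gcongr
  simpa using norm_lowerGamma_le (w := (s.re : ℂ) / 2) (by simpa using hs) hc.le

theorem cexp_mul_jpsi_eq_tsum (s : ℂ) (x : ℝ) :
    Complex.exp (-s * x) * (jpsi (Real.exp (-2 * x)) : ℂ) =
      ∑' n : ℕ+, Complex.exp (-s * x) *
        (Real.exp (-(π * n ^ 2 * Real.exp (-2 * x))) : ℂ) := by
  simp only [jpsi, Complex.ofReal_tsum, tsum_mul_left, neg_mul]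

theorem Real.mul_sq_rpow_neg_div_two {a b : ℝ} (ha : 0 ≤ a) (hb : 0 ≤ b) (σ : ℝ) :
    (a * b ^ 2) ^ (-σ / 2) = a ^ (-σ / 2) * b ^ (-σ) := by
  rw [Real.mul_rpow ha (by positivity), ← Real.rpow_natCast, ← Real.rpow_mul hb]
  ring_nf

theorem Complex.ofReal_mul_sq_cpow_neg_div_two {a b : ℝ} (ha : 0 ≤ a) (hb : 0 ≤ b) (s : ℂ) :
    ((a * b ^ 2 : ℝ) : ℂ) ^ (-s / 2) = (a : ℂ) ^ (-s / 2) * (b : ℂ) ^ (-s) := by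
  rw [Complex.ofReal_mul, Complex.mul_cpow_ofReal_nonneg ha (by positivity),
    ← Real.rpow_natCast, ← Complex.cpow_mul_ofReal_nonneg hb]
  push_cast
  ring_nf

theorem summable_integral_norm_cexp_mul_exp_neg_pi_mul_sq {s : ℂ} (hs : 1 < s.re) :
    Summable fun n : ℕ+ ↦ ∫ x in Ioi (0 : ℝ),
      ‖Complex.exp (-s * x) * (Real.exp (-(π * n ^ 2 * Real.exp (-2 * x))) : ℂ)‖ := by
  have hσ : 0 < s.re := by linarith
  refine Summable.of_nonneg_of_le (fun n ↦ integral_nonneg fun _ ↦ norm_nonneg _)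
    (fun n ↦ integral_norm_cexp_mul_exp_neg_mul_exp_le hσ (by positivity))
    ?_
  simp_rw [Real.mul_sq_rpow_neg_div_two Real.pi_pos.le (Nat.cast_nonneg _)]
  refine (((Real.summable_nat_rpow.mpr (by linarith : -s.re < -1)).comp_injective
    PNat.coe_injective).mul_left (π ^ (-s.re / 2) / 2 * Real.Gamma (s.re / 2))).congr fun n ↦ ?_
  simp only [Function.comp_apply]
  ring

theorem integrableOn_cexp_mul_jpsi {s : ℂ} (hs : 1 < s.re) :
    IntegrableOn (fun x : ℝ ↦ Complex.exp (-s * x) * (jpsi (Real.exp (-2 * x)) : ℂ)) (Ioi 0) := by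
  simp_rw [cexp_mul_jpsi_eq_tsum]
  exact integrable_tsum_of_summable_integral_norm
    (fun n ↦ integrableOn_cexp_mul_exp_neg_mul_exp (by linarith) (by positivity))
    (summable_integral_norm_cexp_mul_exp_neg_pi_mul_sq hs)

theorem hasSum_integral_cexp_mul_jpsi {s : ℂ} (hs : 1 < s.re) :
    HasSum (fun n : ℕ+ ↦
        (π : ℂ) ^ (-s / 2) / 2 * ((n : ℂ) ^ (-s) * lowerGamma (s / 2) (π * n ^ 2)))
      (∫ x in Ioi (0 : ℝ), Complex.exp (-s * x) * (jpsi (Real.exp (-2 * x)) : ℂ)) := by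
  simp_rw [cexp_mul_jpsi_eq_tsum]
  refine (hasSum_integral_of_summable_integral_norm
    (fun n ↦ integrableOn_cexp_mul_exp_neg_mul_exp (by linarith) (by positivity))
    (summable_integral_norm_cexp_mul_exp_neg_pi_mul_sq hs)).congr_fun fun n ↦ ?_
  rw [integral_cexp_mul_exp_neg_mul_exp_eq_lowerGamma (by positivity),
    Complex.ofReal_mul_sq_cpow_neg_div_two Real.pi_pos.le (Nat.cast_nonneg _),
    Complex.ofReal_natCast]
  ring

theorem integral_cexp_mul_jpsi {s : ℂ} (hs : 1 < s.re) :
    ∫ x in Ioi (0 : ℝ), Complex.exp (-s * x) * (jpsi (Real.exp (-2 * x)) : ℂ) =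
      (π : ℂ) ^ (-s / 2) / 2 * (Complex.Gamma (s / 2) * riemannZeta s -
        ∑' n : ℕ+, (n : ℂ) ^ (-s) * upperGamma (s / 2) (π * n ^ 2)) := by
  have hw : 0 < (s / 2).re := by rw [Complex.div_ofNat_re]; linarith
  have h := ((hasSum_pnat_cpow_neg_riemannZeta hs).mul_left
    ((π : ℂ) ^ (-s / 2) / 2 * Complex.Gamma (s / 2))).sub (hasSum_integral_cexp_mul_jpsi hs)
  have h' : HasSum (fun n : ℕ+ ↦ (π : ℂ) ^ (-s / 2) / 2 *
      ((n : ℂ) ^ (-s) * upperGamma (s / 2) (π * n ^ 2))) _ :=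
    h.congr_fun fun n ↦ by
      rw [← lowerGamma_add_upperGamma hw (X := π * n ^ 2) (by positivity)]
      ring
  rw [mul_sub, ← tsum_mul_left, h'.tsum_eq]
  ring

theorem stmt19 (s : ℂ) (hs : 1 < s.re) :
    π / 2 * ∫ x in Set.Ioi (0 : ℝ),
        Complex.exp (-s * x) * ((Real.exp x - 2 * jpsi (Real.exp (-2 * x)) : ℝ) : ℂ)
      = π / 2 * (1 / (s - 1) - 2 * xi s / (s * (s - 1))
          + (π : ℂ) ^ (-s / 2) * ∑' n : ℕ+, (n : ℂ) ^ (-s) * upperGamma (s / 2) (π * n ^ 2)) := by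
  have hs0 : s ≠ 0 := Complex.ne_zero_of_one_lt_re hs
  have hs1 : s - 1 ≠ 0 := sub_ne_zero.2 (fun h ↦ by simp [h] at hs)
  have hsplit : ∀ x : ℝ,
      Complex.exp (-s * x) * ((Real.exp x - 2 * jpsi (Real.exp (-2 * x)) : ℝ) : ℂ) =
        Complex.exp (-(s - 1) * x) -
          2 * (Complex.exp (-s * x) * (jpsi (Real.exp (-2 * x)) : ℂ)) :=
    fun x ↦ by
      rw [Complex.ofReal_sub, Complex.ofReal_mul, Complex.ofReal_exp, mul_sub, ← Complex.exp_add]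
      push_cast
      ring_nf
  rw [funext hsplit, integral_sub (integrableOn_exp_mul_complex_Ioi (by simpa using hs) 0)
    ((integrableOn_cexp_mul_jpsi hs).const_mul 2), integral_const_mul,
    integral_Ioi_cexp_neg_mul (by simpa using hs), integral_cexp_mul_jpsi hs, xi]
  field_simp
  ring
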